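/- arXiv:2002.11254 — 4 statements merged into one kernel-verified Lean document; each statement's English description precedes it below -/
import Mathlib

section
/- For a unit vector x in a complex Hilbert space H, let E_x = I - x⊗x. Then the set of operators T with E_x ≤* T equals { E_x + γ·(x⊗x) : γ ∈ ℂ }. -/
set_option synthInstance.maxHeartbeats 1000000
set_option maxHeartbeats 1000000

open ContinuousLinearMap

variable {H : Type*} [NormedAddCommGroup H] [InnerProductSpace ℂ H] [CompleteSpace H]

/-- The star order on bounded operators: `A ≤* B` iff `A*A = A*B` and `AA* = BA*`. -/
def starLE (A B : H →L[ℂ] H) : Prop :=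
  adjoint A * A = adjoint A * B ∧ A * adjoint A = B * adjoint A

/-- The rank-one operator `x ⊗ y : z ↦ ⟨z, y⟩ x`. -/
noncomputable def rankOne (x y : H) : H →L[ℂ] H := (innerSL ℂ y).smulRight x

/-! Below a star projection `E`, the star order `E ≤* T` says exactly that `T` is the identity on
the range of `E`, i.e. `E T = E = T E`. With `P = 1 - E`, these two equations force `T = E + P T P`,
and when `P = x ⊗ x` is rank one the compression `P T P` is `⟪x, T x⟫ • P`. -/

theorem IsIdempotentElem.mul_eq_and_mul_eq_iff {R : Type*} [Ring R] {q t : R}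
    (hq : IsIdempotentElem q) :
    q * t = q ∧ t * q = q ↔ ∃ s, t = q + (1 - q) * s * (1 - q) := by
  constructor
  · rintro ⟨hqt, htq⟩
    refine ⟨t, ?_⟩
    calc t = q * t + (1 - q) * t * q + (1 - q) * t * (1 - q) := by noncomm_ring
      _ = q + (1 - q) * q + (1 - q) * t * (1 - q) := by rw [hqt, mul_assoc, htq]
      _ = q + (1 - q) * t * (1 - q) := by rw [hq.one_sub_mul_self, add_zero]
  · rintro ⟨s, rfl⟩
    constructor
    · rw [mul_add, hq.eq, ← mul_assoc, ← mul_assoc, hq.mul_one_sub_self, zero_mul, zero_mul,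
        add_zero]
    · rw [add_mul, hq.eq, mul_assoc, hq.one_sub_mul_self, mul_zero, add_zero]

section

omit [CompleteSpace H]

lemma rankOne_eq_innerProductSpace_rankOne (x y : H) :
    rankOne x y = InnerProductSpace.rankOne ℂ x y := rfl

lemma rankOne_self_mul_mul_rankOne_self (x : H) (S : H →L[ℂ] H) :
    rankOne x x * S * rankOne x x = inner ℂ x (S x) • rankOne x x := by
  rw [mul_assoc, rankOne_eq_innerProductSpace_rankOne, mul_def, mul_def,
    InnerProductSpace.comp_rankOne, InnerProductSpace.rankOne_comp_rankOne]

end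

lemma starLE_iff_of_isStarProjection {E T : H →L[ℂ] H} (hE : IsStarProjection E) :
    starLE E T ↔ E * T = E ∧ T * E = E := by
  rw [starLE, ← star_eq_adjoint, hE.isSelfAdjoint.star_eq, hE.isIdempotentElem.eq, eq_comm,
    @eq_comm _ E]

theorem star_le_above_coprojection (x : H) (hx : ‖x‖ = 1) :
    {T : H →L[ℂ] H | starLE (1 - rankOne x x) T} =
      {T : H →L[ℂ] H | ∃ γ : ℂ, T = (1 - rankOne x x) + γ • rankOne x x} := by
  have hP : IsStarProjection (rankOne x x) := InnerProductSpace.isStarProjection_rankOne_self hx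
  ext T
  simp only [Set.mem_ofPred_eq, starLE_iff_of_isStarProjection hP.one_sub,
    hP.isIdempotentElem.one_sub.mul_eq_and_mul_eq_iff, sub_sub_cancel,
    rankOne_self_mul_mul_rankOne_self]
  constructor
  · rintro ⟨S, hS⟩
    exact ⟨_, hS⟩
  · rintro ⟨γ, hγ⟩
    exact ⟨γ • 1, by
      rwa [smul_apply, one_apply_eq_self, inner_smul_right, inner_self_eq_one_of_norm_eq_one hx,
        mul_one]⟩
end

section
/- Uniqueness of the finite Penrose decomposition: if Σ_{j=1}^n a_j U_j = Σ_{i=1}^m b_i V_i where (a_j) are distinct positive reals, (b_i) are distinct positive reals, and (U_j), (V_i) are families of nonzero mutually orthogonal partial isometries, then n = m and after a permutation a_j = b_j and U_j = V_j for all j. -/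
set_option synthInstance.maxHeartbeats 1000000
set_option maxHeartbeats 1000000

open ContinuousLinearMap

variable {H : Type*} [NormedAddCommGroup H] [InnerProductSpace ℂ H] [CompleteSpace H]

lemma extract_aux {M : Type*} [AddCommGroup M] [Module ℂ M] {ι : Type*} [Fintype ι]
    (d : ι → ℂ) (X : ι → M) (h : ∀ k : ℕ, ∑ t, d t ^ k • X t = 0) (v : ℂ) :
    ∑ t, (if d t = v then X t else 0) = 0 := by
  classical
  set s : Finset ℂ := insert v (Finset.image d Finset.univ) with hs
  set p : Polynomial ℂ := Lagrange.interpolate s id (fun w => if w = v then 1 else 0) with hpdef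
  have hp : ∀ x ∈ s, Polynomial.eval x p = if x = v then 1 else 0 := by
    intro x hx
    exact Lagrange.eval_interpolate_at_node _ (Set.injOn_id _) hx
  have h0 : ∑ t, Polynomial.eval (d t) p • X t = 0 := by
    have he : ∀ t, Polynomial.eval (d t) p • X t
        = ∑ i ∈ Finset.range (p.natDegree + 1), p.coeff i • ((d t) ^ i • X t) := by
      intro t
      rw [Polynomial.eval_eq_sum_range, Finset.sum_smul]
      simp [smul_smul]
    simp_rw [he]
    rw [Finset.sum_comm]
    simp [← Finset.smul_sum, h]
  calc ∑ t, (if d t = v then X t else 0) = ∑ t, Polynomial.eval (d t) p • X t := by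
        apply Finset.sum_congr rfl
        intro t _
        rw [hp (d t) (by simp [hs])]
        split <;> simp
    _ = 0 := h0

lemma adj_smul_real (c : ℝ) (A : H →L[ℂ] H) :
    adjoint ((c : ℂ) • A) = (c : ℂ) • adjoint A := by
  rw [← star_eq_adjoint, ← star_eq_adjoint, star_smul]
  simp

lemma step_mul (n : ℕ) (a : Fin n → ℝ) (U : Fin n → (H →L[ℂ] H))
    (hUpi : ∀ j, U j * adjoint (U j) * U j = U j)
    (hUorth : ∀ i j, i ≠ j → adjoint (U i) * U j = 0 ∧ U i * adjoint (U j) = 0)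
    (c : Fin n → ℂ) :
    (∑ j, c j • U j) * (adjoint (∑ j, (a j : ℂ) • U j) * (∑ j, (a j : ℂ) • U j))
      = ∑ j, (c j * (a j : ℂ)^2) • U j := by
  have hadj : adjoint (∑ j, (a j : ℂ) • U j) = ∑ j, (a j : ℂ) • adjoint (U j) := by
    rw [map_sum]
    exact Finset.sum_congr rfl fun j _ => adj_smul_real (a j) (U j)
  rw [hadj, Finset.sum_mul_sum]
  have h1 : ∀ i j, ((a i : ℂ) • adjoint (U i)) * ((a j : ℂ) • U j)
      = if i = j then ((a j : ℂ)^2) • (adjoint (U j) * U j) else 0 := by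
    intro i j
    by_cases hij : i = j
    · subst hij
      rw [smul_mul_smul_comm, if_pos rfl, sq]
    · rw [smul_mul_smul_comm, (hUorth i j hij).1, if_neg hij, smul_zero]
  simp_rw [h1, Finset.sum_ite_eq, Finset.mem_univ, if_true, Finset.mul_sum]
  have h2 : ∀ j i, (c j • U j) * ((a i : ℂ)^2 • (adjoint (U i) * U i))
      = if i = j then (c j * (a j : ℂ)^2) • U j else 0 := by
    intro j i
    by_cases hij : i = j
    · subst hij
      rw [smul_mul_smul_comm, if_pos rfl, ← mul_assoc, hUpi, mul_comm]
    · rw [smul_mul_smul_comm, ← mul_assoc, (hUorth j i (Ne.symm hij)).2, zero_mul,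
        smul_zero, if_neg hij]
  simp_rw [Finset.sum_mul, h2, Finset.sum_ite_eq, Finset.mem_univ, if_true]

lemma pow_formula (n : ℕ) (a : Fin n → ℝ) (U : Fin n → (H →L[ℂ] H))
    (hUpi : ∀ j, U j * adjoint (U j) * U j = U j)
    (hUorth : ∀ i j, i ≠ j → adjoint (U i) * U j = 0 ∧ U i * adjoint (U j) = 0)
    (k : ℕ) :
    (∑ j, (a j : ℂ) • U j) *
      (adjoint (∑ j, (a j : ℂ) • U j) * (∑ j, (a j : ℂ) • U j)) ^ k
      = ∑ j, (((a j : ℂ)^2) ^ k * (a j : ℂ)) • U j := by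
  induction k with
  | zero => simp
  | succ k ih =>
    rw [pow_succ, ← mul_assoc, ih, step_mul n a U hUpi hUorth]
    congr 1
    ext j : 1
    ring_nf

lemma sq_cast_inj {x y : ℝ} (hx : 0 < x) (hy : 0 < y) :
    ((x : ℂ))^2 = ((y : ℂ))^2 ↔ x = y := by
  constructor
  · intro h
    have h2 : x^2 = y^2 := by exact_mod_cast h
    nlinarith
  · rintro rfl; rfl

lemma penrose_key (n m : ℕ)
    (a : Fin n → ℝ) (U : Fin n → (H →L[ℂ] H))
    (b : Fin m → ℝ) (V : Fin m → (H →L[ℂ] H))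
    (hapos : ∀ j, 0 < a j) (hadist : Function.Injective a)
    (hbpos : ∀ i, 0 < b i) (hbdist : Function.Injective b)
    (hUne : ∀ j, U j ≠ 0) (hUpi : ∀ j, U j * adjoint (U j) * U j = U j)
    (hUorth : ∀ i j, i ≠ j → adjoint (U i) * U j = 0 ∧ U i * adjoint (U j) = 0)
    (hVpi : ∀ i, V i * adjoint (V i) * V i = V i)
    (hVorth : ∀ i j, i ≠ j → adjoint (V i) * V j = 0 ∧ V i * adjoint (V j) = 0)
    (heq : ∑ j, (a j : ℂ) • U j = ∑ i, (b i : ℂ) • V i) :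
    ∀ j, ∃ i, b i = a j ∧ U j = V i := by
  classical
  have hTT : ∀ k : ℕ, ∑ j, (((a j : ℂ)^2) ^ k * (a j : ℂ)) • U j
      = ∑ i, (((b i : ℂ)^2) ^ k * (b i : ℂ)) • V i := by
    intro k
    rw [← pow_formula n a U hUpi hUorth k, ← pow_formula m b V hVpi hVorth k, heq]
  set d : Fin n ⊕ Fin m → ℂ :=
    Sum.elim (fun j => ((a j : ℂ))^2) (fun i => ((b i : ℂ))^2) with hd
  set X : Fin n ⊕ Fin m → (H →L[ℂ] H) :=
    Sum.elim (fun j => (a j : ℂ) • U j) (fun i => -((b i : ℂ) • V i)) with hX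
  have h : ∀ k : ℕ, ∑ t, d t ^ k • X t = 0 := by
    intro k
    rw [Fintype.sum_sum_type]
    simp only [hd, hX, Sum.elim_inl, Sum.elim_inr, smul_neg, smul_smul, Finset.sum_neg_distrib]
    rw [hTT k]
    exact add_neg_cancel _
  intro j0
  have hex := extract_aux d X h ((a j0 : ℂ)^2)
  rw [Fintype.sum_sum_type] at hex
  simp only [hd, hX, Sum.elim_inl, Sum.elim_inr] at hex
  have h1 : ∑ j, (if ((a j : ℂ))^2 = ((a j0 : ℂ))^2 then (a j : ℂ) • U j else 0)
      = (a j0 : ℂ) • U j0 := by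
    rw [Finset.sum_eq_single j0]
    · rw [if_pos rfl]
    · intro j _ hj
      rw [if_neg]
      intro hcontra
      exact hj (hadist ((sq_cast_inj (hapos j) (hapos j0)).mp hcontra))
    · intro hcontra
      exact absurd (Finset.mem_univ j0) hcontra
  rw [h1] at hex
  have h2 : ∑ i, (if ((b i : ℂ))^2 = ((a j0 : ℂ))^2 then -((b i : ℂ) • V i) else 0)
      = -∑ i, (if b i = a j0 then (b i : ℂ) • V i else 0) := by
    rw [← Finset.sum_neg_distrib]
    apply Finset.sum_congr rfl
    intro i _
    by_cases hc : b i = a j0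
    · rw [if_pos ((sq_cast_inj (hbpos i) (hapos j0)).mpr hc), if_pos hc]
    · rw [if_neg (fun hcontra => hc ((sq_cast_inj (hbpos i) (hapos j0)).mp hcontra)),
        if_neg hc, neg_zero]
  rw [h2] at hex
  have hmain : (a j0 : ℂ) • U j0 = ∑ i, (if b i = a j0 then (b i : ℂ) • V i else 0) := by
    linear_combination (norm := abel) hex
  have ha0 : (a j0 : ℂ) ≠ 0 := by
    exact_mod_cast (hapos j0).ne'
  by_cases hexi : ∃ i, b i = a j0
  · obtain ⟨i0, hi0⟩ := hexi
    have h3 : ∑ i, (if b i = a j0 then (b i : ℂ) • V i else 0) = (b i0 : ℂ) • V i0 := by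
      rw [Finset.sum_eq_single i0]
      · rw [if_pos hi0]
      · intro i _ hi
        rw [if_neg]
        intro hcontra
        exact hi (hbdist (hcontra.trans hi0.symm))
      · intro hcontra
        exact absurd (Finset.mem_univ i0) hcontra
    rw [h3, hi0] at hmain
    exact ⟨i0, hi0, smul_right_injective (H →L[ℂ] H) ha0 hmain⟩
  · exfalso
    push_neg at hexi
    have h4 : ∑ i, (if b i = a j0 then (b i : ℂ) • V i else 0) = 0 := by
      apply Finset.sum_eq_zero
      intro i _
      rw [if_neg (hexi i)]
    rw [h4] at hmain
    rcases smul_eq_zero.mp hmain with h | h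
    · exact ha0 h
    · exact hUne j0 h

theorem penrose_decomposition_unique (n m : ℕ)
    (a : Fin n → ℝ) (U : Fin n → (H →L[ℂ] H))
    (b : Fin m → ℝ) (V : Fin m → (H →L[ℂ] H))
    (hapos : ∀ j, 0 < a j) (hadist : Function.Injective a)
    (hbpos : ∀ i, 0 < b i) (hbdist : Function.Injective b)
    (hUne : ∀ j, U j ≠ 0) (hUpi : ∀ j, U j * adjoint (U j) * U j = U j)
    (hUorth : ∀ i j, i ≠ j → adjoint (U i) * U j = 0 ∧ U i * adjoint (U j) = 0)
    (hVne : ∀ i, V i ≠ 0) (hVpi : ∀ i, V i * adjoint (V i) * V i = V i)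
    (hVorth : ∀ i j, i ≠ j → adjoint (V i) * V j = 0 ∧ V i * adjoint (V j) = 0)
    (heq : ∑ j, (a j : ℂ) • U j = ∑ i, (b i : ℂ) • V i) :
    n = m ∧ ∃ e : Fin n ≃ Fin m, ∀ j, a j = b (e j) ∧ U j = V (e j) := by
  have hfwd := penrose_key n m a U b V hapos hadist hbpos hbdist hUne hUpi hUorth hVpi
    hVorth heq
  have hbwd := penrose_key m n b V a U hbpos hbdist hapos hadist hVne hVpi hVorth hUpi
    hUorth heq.symm
  choose e0 he0b he0U using hfwd
  choose f0 hf0a hf0V using hbwd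
  have hbij : Function.Bijective e0 := by
    constructor
    · intro j1 j2 hj
      exact hadist (by rw [← he0b j1, ← he0b j2, hj])
    · intro i
      exact ⟨f0 i, hbdist (by rw [he0b, hf0a])⟩
  refine ⟨by simpa using Fintype.card_congr (Equiv.ofBijective e0 hbij),
    Equiv.ofBijective e0 hbij, fun j => ⟨(he0b j).symm, he0U j⟩⟩
end

section
/- Let A = Σ_{j∈J} a_j U_j and B = Σ_{i∈K} b_i V_i be finite Penrose decompositions (distinct positive coefficients, mutually orthogonal nonzero partial isometries). If there is an injection Λ: J → K with a_j = b_{Λ(j)} and U_j ≤* V_{Λ(j)} for all j, then A ≤* B. -/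
set_option synthInstance.maxHeartbeats 1000000
set_option maxHeartbeats 1000000

open ContinuousLinearMap

variable {H : Type*} [NormedAddCommGroup H] [InnerProductSpace ℂ H] [CompleteSpace H]

theorem star_le_of_penrose_injection {J K : Type*} [Fintype J] [Fintype K]
    (a : J → ℝ) (U : J → (H →L[ℂ] H)) (b : K → ℝ) (V : K → (H →L[ℂ] H))
    (hapos : ∀ j, 0 < a j) (hadist : Function.Injective a)
    (hbpos : ∀ i, 0 < b i) (hbdist : Function.Injective b)
    (hUne : ∀ j, U j ≠ 0) (hUpi : ∀ j, U j * adjoint (U j) * U j = U j)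
    (hUorth : ∀ i j, i ≠ j → adjoint (U i) * U j = 0 ∧ U i * adjoint (U j) = 0)
    (hVne : ∀ i, V i ≠ 0) (hVpi : ∀ i, V i * adjoint (V i) * V i = V i)
    (hVorth : ∀ i j, i ≠ j → adjoint (V i) * V j = 0 ∧ V i * adjoint (V j) = 0)
    (Λ : J → K) (hΛ : Function.Injective Λ)
    (hcoef : ∀ j, a j = b (Λ j)) (hle : ∀ j, starLE (U j) (V (Λ j))) :
    starLE (∑ j, (a j : ℂ) • U j) (∑ i, (b i : ℂ) • V i) := by

  have hstar : ∀ X : H →L[ℂ] H, adjoint X = star X := fun X => (star_eq_adjoint X).symm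
  simp only [starLE, hstar] at hUpi hUorth hVpi hVorth hle ⊢
  -- key orthogonality facts
  have key1 : ∀ j i, i ≠ Λ j → star (U j) * V i = 0 := by
    intro j i h
    have e1 : star (U j) * U j * star (U j) = star (U j) := by
      have := congrArg star (hUpi j)
      simpa [star_mul, mul_assoc] using this
    have e2 : U j * star (U j) = U j * star (V (Λ j)) := by
      have := congrArg star (hle j).2
      simpa [star_mul] using this
    have e0 : star (V (Λ j)) * V i = 0 := (hVorth (Λ j) i (fun hh => h hh.symm)).1
    calc star (U j) * V i = star (U j) * (U j * star (U j)) * V i := by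
          rw [← mul_assoc, e1]
      _ = star (U j) * (U j * star (V (Λ j))) * V i := by rw [e2]
      _ = star (U j) * U j * (star (V (Λ j)) * V i) := by
          rw [← mul_assoc, ← mul_assoc, mul_assoc (star (U j) * U j)]
      _ = 0 := by rw [e0, mul_zero]
  have key2 : ∀ j i, i ≠ Λ j → V i * star (U j) = 0 := by
    intro j i h
    have e1 : star (U j) * U j * star (U j) = star (U j) := by
      have := congrArg star (hUpi j)
      simpa [star_mul, mul_assoc] using this
    have e3 : star (U j) * U j = star (V (Λ j)) * U j := by
      have := congrArg star (hle j).1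
      simpa [star_mul] using this
    have e0 : V i * star (V (Λ j)) = 0 := (hVorth i (Λ j) h).2
    calc V i * star (U j) = V i * (star (U j) * U j * star (U j)) := by rw [e1]
      _ = V i * (star (V (Λ j)) * U j * star (U j)) := by rw [e3]
      _ = V i * star (V (Λ j)) * (U j * star (U j)) := by
          simp only [mul_assoc]
      _ = 0 := by rw [e0, zero_mul]
  have hA : star (∑ j, (a j : ℂ) • U j) = ∑ j, (a j : ℂ) • star (U j) := by
    simp [star_sum, star_smul, Complex.star_def, Complex.conj_ofReal]
  constructor
  · rw [hA, Finset.sum_mul_sum, Finset.sum_mul_sum]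
    refine Finset.sum_congr rfl (fun j _ => ?_)
    rw [Finset.sum_eq_single j, Finset.sum_eq_single (Λ j)]
    · rw [smul_mul_smul_comm, smul_mul_smul_comm, ← hcoef j, (hle j).1]
    · intro i _ hi
      rw [smul_mul_smul_comm, key1 j i hi, smul_zero]
    · intro h; exact absurd (Finset.mem_univ _) h
    · intro j' _ hj'
      rw [smul_mul_smul_comm, (hUorth j j' (Ne.symm hj')).1, smul_zero]
    · intro h; exact absurd (Finset.mem_univ _) h
  · rw [hA, Finset.sum_mul_sum, Finset.sum_mul_sum]
    rw [Finset.sum_comm (s := Finset.univ) (t := Finset.univ)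
      (f := fun i j => ((b i : ℂ) • V i) * ((a j : ℂ) • star (U j)))]
    refine Finset.sum_congr rfl (fun j _ => ?_)
    rw [Finset.sum_eq_single j, Finset.sum_eq_single (Λ j)]
    · rw [smul_mul_smul_comm, smul_mul_smul_comm, ← hcoef j, mul_comm ((a j : ℂ)),
        (hle j).2]
    · intro i _ hi
      rw [smul_mul_smul_comm, key2 j i hi, smul_zero]
    · intro h; exact absurd (Finset.mem_univ _) h
    · intro j' _ hj'
      rw [smul_mul_smul_comm, (hUorth j j' (Ne.symm hj')).2, smul_zero]
    · intro h; exact absurd (Finset.mem_univ _) h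
end

section
/- A nonzero operator A ∈ B(H) is an atom for the star order (i.e., B ≤* A implies B = 0 or B = A) if and only if A has rank one. -/
set_option synthInstance.maxHeartbeats 1000000
set_option maxHeartbeats 1000000

open ContinuousLinearMap

variable {H : Type*} [NormedAddCommGroup H] [InnerProductSpace ℂ H] [CompleteSpace H]

/-!
If `P` is an orthogonal projection commuting with `A* A`, then `A P ≤* A`. Hence for an atom `A`
every closed `A* A`-invariant subspace `K` satisfies `K ≤ ker A` or `Kᗮ ≤ ker A`. Two distinct
nonzero points of the spectrum of `A* A` would be separated by continuous functions `f`, `g` with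
`f g = 0`, and `K = ker f(A* A)` would violate this; so `(A* A)² = b • A* A`, which produces a
vector `y = A* A u` with `A y ≠ 0` spanning an invariant line, and then `(ker A)ᗮ = ℂ y`.
Conversely, `B ≤* A` gives `ker A ≤ ker B`, and `A - B` vanishes on `range B* ≤ (ker A)ᗮ`. If
`(ker A)ᗮ` is a line and `B ≠ 0`, then `range B* = (ker A)ᗮ`, so `A - B` vanishes on
`ker A ⊔ (ker A)ᗮ = ⊤`.
-/

open Module.End Submodule

section Hilbert

variable {𝕜 E F : Type*} [RCLike 𝕜] [NormedAddCommGroup E] [InnerProductSpace 𝕜 E]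
  [CompleteSpace E] [NormedAddCommGroup F] [InnerProductSpace 𝕜 F]

theorem Submodule.commute_starProjection_of_mem_invtSubmodule {T : E →L[𝕜] E}
    (hT : IsSelfAdjoint T) {K : Submodule 𝕜 E} [K.HasOrthogonalProjection]
    (hK : K ∈ invtSubmodule (T : E →ₗ[𝕜] E)) : Commute K.starProjection T := by
  rw [ContinuousLinearMap.IsIdempotentElem.commute_iff K.isIdempotentElem_starProjection,
    K.range_starProjection, K.ker_starProjection]
  exact ⟨hK, ContinuousLinearMap.orthogonal_mem_invtSubmodule (by rwa [hT.adjoint_eq])⟩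

theorem ContinuousLinearMap.finrank_orthogonal_ker (A : E →L[𝕜] F) :
    Module.finrank 𝕜 A.kerᗮ = Module.finrank 𝕜 A.range :=
  ((quotientEquivOfIsCompl _ _ (isCompl_orthogonal _)).symm.trans
    (LinearMap.quotKerEquivRange (A : E →ₗ[𝕜] F))).finrank_eq

theorem IsSelfAdjoint.range_le_orthogonal_ker {T : E →L[𝕜] E} (hT : IsSelfAdjoint T) :
    T.range ≤ T.kerᗮ := by
  rw [ContinuousLinearMap.orthogonal_ker, hT.adjoint_eq]
  exact le_topologicalClosure _

end Hilbert

section StarOrder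

variable {A B : H →L[ℂ] H}

theorem starLE_mul_starProjection {K : Submodule ℂ H} [K.HasOrthogonalProjection]
    (hK : K ∈ invtSubmodule (adjoint A * A).toLinearMap) :
    starLE (A * K.starProjection) A := by
  have hPT : Commute K.starProjection (adjoint A * A) :=
    commute_starProjection_of_mem_invtSubmodule (.star_mul_self A) hK
  have hP : IsStarProjection K.starProjection := isStarProjection_starProjection
  have hadj : adjoint (A * K.starProjection) = K.starProjection * adjoint A := by
    rw [← star_eq_adjoint, star_mul, hP.isSelfAdjoint.star_eq, star_eq_adjoint]
  refine ⟨?_, ?_⟩ <;> rw [hadj]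
  · calc K.starProjection * adjoint A * (A * K.starProjection)
        = K.starProjection * (adjoint A * A * K.starProjection) := by noncomm_ring
      _ = K.starProjection * K.starProjection * (adjoint A * A) := by rw [← hPT.eq]; noncomm_ring
      _ = K.starProjection * adjoint A * A := by rw [hP.isIdempotentElem.eq]; noncomm_ring
  · calc A * K.starProjection * (K.starProjection * adjoint A)
        = A * (K.starProjection * K.starProjection) * adjoint A := by noncomm_ring
      _ = A * (K.starProjection * adjoint A) := by rw [hP.isIdempotentElem.eq]; noncomm_ring

theorem starLE.ker_le_ker (h : starLE B A) : A.ker ≤ B.ker := by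
  intro v (hv : A v = 0)
  rw [← ker_adjoint_comp_self]
  exact congr($(h.1) v).trans (by simp [hv])

theorem starLE.range_adjoint_le_ker_sub (h : starLE B A) : (adjoint B).range ≤ (A - B).ker := by
  rintro _ ⟨v, rfl⟩
  exact sub_eq_zero.mpr congr($(h.2.symm) v)

end StarOrder

section Atom

def IsStarAtom (A : H →L[ℂ] H) : Prop :=
  ∀ B : H →L[ℂ] H, starLE B A → B = 0 ∨ B = A

variable {A : H →L[ℂ] H}

theorem IsStarAtom.le_ker_or_orthogonal_le_ker (hA : IsStarAtom A) (K : Submodule ℂ H)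
    [K.HasOrthogonalProjection]
    (hK : K ∈ invtSubmodule (adjoint A * A).toLinearMap) :
    K ≤ A.ker ∨ Kᗮ ≤ A.ker := by
  refine (hA _ (starLE_mul_starProjection hK)).imp (fun h v hv => ?_) (fun h v hv => ?_)
  · simpa [starProjection_eq_self_iff.mpr hv] using congr($h v)
  · simpa [(starProjection_apply_eq_zero_iff K).mpr hv] using congr($h v).symm

theorem IsStarAtom.mul_eq_zero_or_mul_eq_zero (hA : IsStarAtom A) {F G : H →L[ℂ] H}
    (hF : IsSelfAdjoint F) (hFT : Commute F (adjoint A * A)) (hFG : F * G = 0) :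
    A * F = 0 ∨ A * G = 0 := by
  have hK : F.ker ∈ invtSubmodule (adjoint A * A).toLinearMap := by
    intro v (hv : F v = 0)
    exact congr($(hFT.eq) v).trans (by simp [hv])
  refine (hA.le_ker_or_orthogonal_le_ker F.ker hK).symm.imp (fun h => ?_) (fun h => ?_)
  · ext v
    exact h (hF.range_le_orthogonal_ker ⟨v, rfl⟩)
  · ext v
    exact h (show F (G v) = 0 from congr($hFG v))

theorem forall_mem_spectrum_mul_eq_zero_of_mul_cfc_eq_zero {f : ℝ → ℝ} (hf : Continuous f)
    (h : A * cfc f (adjoint A * A) = 0) :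
    ∀ t ∈ spectrum ℝ (adjoint A * A), t * f t = 0 := by
  have hT : IsSelfAdjoint (adjoint A * A) := .star_mul_self A
  have : cfc (fun t => t * f t) (adjoint A * A) = cfc (0 : ℝ → ℝ) (adjoint A * A) := by
    rw [cfc_mul (fun t : ℝ => t) f _ continuousOn_id hf.continuousOn, cfc_id' ℝ _ hT, cfc_zero,
      mul_assoc, h, mul_zero]
  exact eqOn_of_cfc_eq_cfc this (continuous_id.mul hf).continuousOn

theorem IsStarAtom.eq_of_mem_spectrum (hA : IsStarAtom A) {a b : ℝ}
    (ha : a ∈ spectrum ℝ (adjoint A * A)) (hb : b ∈ spectrum ℝ (adjoint A * A))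
    (ha0 : a ≠ 0) (hb0 : b ≠ 0) : a = b := by
  wlog hab : a < b generalizing a b
  · rcases (not_lt.mp hab).lt_or_eq with h | h
    · exact (this hb ha hb0 ha0 h).symm
    · exact h.symm
  exfalso
  obtain ⟨c, hac, hcb⟩ := exists_between hab
  set f : ℝ → ℝ := fun t => max (t - c) 0
  set g : ℝ → ℝ := fun t => max (c - t) 0
  have hf : Continuous f := by fun_prop
  have hg : Continuous g := by fun_prop
  have hfg : cfc f (adjoint A * A) * cfc g (adjoint A * A) = 0 := by
    rw [← cfc_mul f g, ← cfc_zero ℝ (adjoint A * A)]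
    refine cfc_congr fun t _ => ?_
    rcases le_total t c with h | h
    · simp [f, h]
    · simp [g, h]
  have hbf : b * f b ≠ 0 := mul_ne_zero hb0 (lt_max_of_lt_left (sub_pos.mpr hcb)).ne'
  have hag : a * g a ≠ 0 := mul_ne_zero ha0 (lt_max_of_lt_left (sub_pos.mpr hac)).ne'
  rcases hA.mul_eq_zero_or_mul_eq_zero (cfc_predicate f _) ((Commute.refl _).cfc_real f) hfg
    with h | h
  · exact hbf (forall_mem_spectrum_mul_eq_zero_of_mul_cfc_eq_zero hf h b hb)
  · exact hag (forall_mem_spectrum_mul_eq_zero_of_mul_cfc_eq_zero hg h a ha)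

theorem IsStarAtom.exists_mul_self_eq_smul (hA : IsStarAtom A) :
    ∃ b : ℝ, (adjoint A * A) * (adjoint A * A) = b • (adjoint A * A) := by
  have hT : IsSelfAdjoint (adjoint A * A) := .star_mul_self A
  obtain ⟨b, hb⟩ : ∃ b : ℝ, ∀ t ∈ spectrum ℝ (adjoint A * A), t = 0 ∨ t = b := by
    by_cases h : ∃ b ∈ spectrum ℝ (adjoint A * A), b ≠ 0
    · obtain ⟨b, hb, hb0⟩ := h
      exact ⟨b, fun t ht =>
        or_iff_not_imp_left.mpr fun ht0 => hA.eq_of_mem_spectrum ht hb ht0 hb0⟩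
    · push Not at h
      exact ⟨0, fun t ht => .inl (h t ht)⟩
  refine ⟨b, ?_⟩
  calc (adjoint A * A) * (adjoint A * A) = cfc (fun t : ℝ => t * t) (adjoint A * A) := by
        rw [cfc_mul (fun t : ℝ => t) (fun t : ℝ => t), cfc_id' ℝ _ hT]
    _ = cfc (fun t : ℝ => b * t) (adjoint A * A) :=
        cfc_congr fun t ht => by rcases hb t ht with rfl | rfl <;> ring
    _ = b • (adjoint A * A) := cfc_const_mul_id b _

theorem IsStarAtom.exists_invtSubmodule_span_singleton (hA : IsStarAtom A) (h0 : A ≠ 0) :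
    ∃ y, A y ≠ 0 ∧ (ℂ ∙ y) ∈ invtSubmodule (adjoint A * A).toLinearMap := by
  have hT : IsSelfAdjoint (adjoint A * A) := .star_mul_self A
  obtain ⟨b, hb⟩ := hA.exists_mul_self_eq_smul
  obtain ⟨u, hu⟩ : ∃ u, (adjoint A * A) u ≠ 0 := by
    by_contra! h
    exact h0 (ext fun v => (ker_adjoint_comp_self A).le (h v))
  refine ⟨(adjoint A * A) u, fun h => hu ?_, ?_⟩
  · -- `A (T u) = 0` forces `T (T u) = 0`, and `ker (T* T) = ker T` for `T = A* A`.
    refine (ker_adjoint_comp_self (adjoint A * A)).le ?_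
    change adjoint (adjoint A * A) ((adjoint A * A) u) = 0
    rw [hT.adjoint_eq]
    simpa using congr(adjoint A $h)
  · have hTy : (adjoint A * A) ((adjoint A * A) u) = b • (adjoint A * A) u := congr($hb u)
    intro v hv
    obtain ⟨c, rfl⟩ := mem_span_singleton.mp hv
    rw [mem_comap, ContinuousLinearMap.coe_coe, map_smul, hTy]
    exact smul_mem _ _ (smul_of_tower_mem _ b (mem_span_singleton_self _))

theorem IsStarAtom.finrank_orthogonal_ker_eq_one (hA : IsStarAtom A) (h0 : A ≠ 0) :
    Module.finrank ℂ A.kerᗮ = 1 := by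
  obtain ⟨y, hy, hK⟩ := hA.exists_invtSubmodule_span_singleton h0
  have hy0 : y ≠ 0 := fun h => hy (by rw [h, map_zero])
  have hle : A.kerᗮ ≤ ℂ ∙ y := by
    have h := (hA.le_ker_or_orthogonal_le_ker _ hK).resolve_left
      fun h => hy (h (mem_span_singleton_self y))
    simpa using orthogonal_le h
  have hne : A.kerᗮ ≠ ⊥ := by
    rw [Ne, orthogonal_eq_bot_iff]
    exact fun h => hy (h.ge (mem_top (x := y)))
  have hline : IsAtom (ℂ ∙ y) := isAtom_iff_finrank_eq_one.mpr (finrank_span_singleton hy0)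
  rw [(hline.le_iff.mp hle).resolve_left hne, finrank_span_singleton hy0]

theorem isStarAtom_of_finrank_orthogonal_ker_eq_one (h : Module.finrank ℂ A.kerᗮ = 1) :
    IsStarAtom A := by
  intro B hB
  refine or_iff_not_imp_left.mpr fun hB0 => ?_
  have hle : (adjoint B).range ≤ A.kerᗮ :=
    calc (adjoint B).range ≤ (adjoint B).range.topologicalClosure := le_topologicalClosure _
      _ = B.kerᗮ := (orthogonal_ker B).symm
      _ ≤ A.kerᗮ := orthogonal_le hB.ker_le_ker
  have hne : (adjoint B).range ≠ ⊥ := by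
    rwa [Ne, LinearMap.range_eq_bot, ← toLinearMap_zero, coe_inj,
      LinearIsometryEquiv.map_eq_zero_iff]
  have heq : (adjoint B).range = A.kerᗮ :=
    ((isAtom_iff_finrank_eq_one.mpr h).le_iff.mp hle).resolve_left hne
  have htop : (A - B).ker = ⊤ := by
    rw [eq_top_iff, ← sup_orthogonal_of_hasOrthogonalProjection (K := A.ker), ← heq]
    refine sup_le (fun v (hv : A v = 0) => ?_) hB.range_adjoint_le_ker_sub
    simp [hv, show B v = 0 from hB.ker_le_ker hv]
  exact (sub_eq_zero.mp (ext fun v => htop.ge (mem_top (x := v)))).symm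

end Atom

theorem atom_iff_rank_one_general
    (A : H →L[ℂ] H) (hA : A ≠ 0) :
    (∀ B : H →L[ℂ] H, starLE B A → B = 0 ∨ B = A) ↔
      Module.finrank ℂ (LinearMap.range (A : H →ₗ[ℂ] H)) = 1 := by
  rw [← finrank_orthogonal_ker]
  exact ⟨fun h => IsStarAtom.finrank_orthogonal_ker_eq_one h hA,
    isStarAtom_of_finrank_orthogonal_ker_eq_one⟩

theorem atom_iff_rank_one (hdim : 2 ≤ Module.rank ℂ H)
    (A : H →L[ℂ] H) (hA : A ≠ 0) :
    (∀ B : H →L[ℂ] H, starLE B A → B = 0 ∨ B = A) ↔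
      Module.finrank ℂ (LinearMap.range (A : H →ₗ[ℂ] H)) = 1 :=
  atom_iff_rank_one_general A hA
end
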